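/- arXiv:1502.03346 — 2 statements merged into one kernel-verified Lean document; each statement's English description precedes it below -/
import Mathlib

section
/- Let X be a metric space, let E' be a finite set of points of X of cardinality exactly k with k ≥ 1, let ε* ∈ E', and let ε' be a point of X with dist(ε*, ε') = c where c > 0. Suppose dist(ε, ε') ≤ c + d for every ε ∈ E' with ε ≠ ε*, where d ≥ 0. Then the adversary's linking likelihood for ε*, defined as 1 − dist(ε*, ε') / Σ_{ε ∈ E'} dist(ε, ε'), is at most 1 − c / (c + (k−1)(c + d)). -/
/-- Identity disclosure bound. Under the hypotheses of Statement 3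
with `c > 0` and `d ≥ 0`, the adversary's linking likelihood
`1 - dist εs ε' / ∑ ε ∈ E', dist ε ε'` is at most `1 - c / (c + (k-1)(c+d))`. -/
theorem identity_disclosure {X : Type*} [MetricSpace X] (E' : Finset X) (k : ℕ) (hk : 1 ≤ k)
    (hcard : E'.card = k) (εs : X) (hmem : εs ∈ E') (ε' : X) (c d : ℝ)
    (hc : dist εs ε' = c) (hcpos : 0 < c) (hd : 0 ≤ d)
    (hbound : ∀ ε ∈ E', ε ≠ εs → dist ε ε' ≤ c + d) :
    1 - dist εs ε' / ∑ ε ∈ E', dist ε ε' ≤ 1 - c / (c + ((k : ℝ) - 1) * (c + d)) := by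
  classical
  rw [hc]
  have hsum : (∑ ε ∈ E', dist ε ε') = c + ∑ ε ∈ E'.erase εs, dist ε ε' := by
    rw [← Finset.add_sum_erase _ _ hmem, hc]
  have hrest_le : ∑ ε ∈ E'.erase εs, dist ε ε' ≤ ((k : ℝ) - 1) * (c + d) := by
    have := Finset.sum_le_card_nsmul (E'.erase εs) (fun ε => dist ε ε') (c + d)
      (fun ε hε => hbound ε (Finset.mem_of_mem_erase hε) (Finset.ne_of_mem_erase hε))
    rw [Finset.card_erase_of_mem hmem, hcard] at this
    have hk1 : ((k - 1 : ℕ) : ℝ) = (k : ℝ) - 1 := by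
      push_cast [hk]; ring
    calc _ ≤ ((k-1 : ℕ) : ℝ) * (c + d) := by simpa [nsmul_eq_mul, mul_add] using this
      _ = _ := by rw [hk1]
  have hrest_nonneg : 0 ≤ ∑ ε ∈ E'.erase εs, dist ε ε' :=
    Finset.sum_nonneg fun _ _ => dist_nonneg
  have hpos : 0 < c + ∑ ε ∈ E'.erase εs, dist ε ε' := by linarith
  have hle : c + ∑ ε ∈ E'.erase εs, dist ε ε' ≤ c + ((k : ℝ) - 1) * (c + d) := by linarith
  have := div_le_div_of_nonneg_left hcpos.le hpos hle
  rw [hsum]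
  linarith [div_le_div_of_nonneg_left hcpos.le hpos hle]
end

section
/- Let X be a metric space, let E' be a finite set of points of X of cardinality exactly k with k ≥ 1, let ε* ∈ E', and let ε' be a point of X with dist(ε*, ε') = c where c > 0. Suppose dist(ε, ε') ≤ c + d for every ε ∈ E' with ε ≠ ε*, where d ≥ 0. Then ε* and ε' are σ-unlinkable for σ = 1 − c / (c + (k−1)(c + d)), i.e., the adversary's linking likelihood 1 − dist(ε*, ε') / Σ_{ε ∈ E'} dist(ε, ε') satisfies 1 − dist(ε*, ε') / Σ_{ε ∈ E'} dist(ε, ε') ≤ σ. -/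
/-- σ-unlinkability. Under the hypotheses of Statement 4, the entities
`εs` and `ε'` are σ-unlinkable for `σ = 1 - c / (c + (k-1)(c+d))`, i.e. the
adversary's linking likelihood is at most `σ`. -/
theorem sigma_unlinkable {X : Type*} [MetricSpace X] (E' : Finset X) (k : ℕ) (hk : 1 ≤ k)
    (hcard : E'.card = k) (εs : X) (hmem : εs ∈ E') (ε' : X) (c d σ : ℝ)
    (hc : dist εs ε' = c) (hcpos : 0 < c) (hd : 0 ≤ d)
    (hbound : ∀ ε ∈ E', ε ≠ εs → dist ε ε' ≤ c + d)
    (hσ : σ = 1 - c / (c + ((k : ℝ) - 1) * (c + d))) :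
    1 - dist εs ε' / ∑ ε ∈ E', dist ε ε' ≤ σ := by
  classical
  subst hσ
  rw [hc]
  have hsum : ∑ ε ∈ E', dist ε ε' = c + ∑ ε ∈ E'.erase εs, dist ε ε' := by
    rw [← Finset.add_sum_erase _ _ hmem, hc]
  have hub : ∑ ε ∈ E'.erase εs, dist ε ε' ≤ ((k : ℝ) - 1) * (c + d) := by
    calc ∑ ε ∈ E'.erase εs, dist ε ε' ≤ ∑ _ε ∈ E'.erase εs, (c + d) := by
          apply Finset.sum_le_sum
          intro ε hε
          exact hbound ε (Finset.mem_of_mem_erase hε) (Finset.ne_of_mem_erase hε)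
      _ = ((k : ℝ) - 1) * (c + d) := by
          rw [Finset.sum_const, Finset.card_erase_of_mem hmem, hcard, nsmul_eq_mul,
            Nat.cast_sub hk, Nat.cast_one]
  have hlb : (0:ℝ) ≤ ∑ ε ∈ E'.erase εs, dist ε ε' :=
    Finset.sum_nonneg fun ε _ => dist_nonneg
  have hSpos : 0 < ∑ ε ∈ E', dist ε ε' := by rw [hsum]; linarith
  have : c / (c + ((k : ℝ) - 1) * (c + d)) ≤ c / ∑ ε ∈ E', dist ε ε' := by
    apply div_le_div_of_nonneg_left hcpos.le hSpos
    rw [hsum]; linarith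
  linarith
end
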